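/- Let (X,σ) be a shift space whose language 𝓛 admits a decomposition 𝓛 = 𝓒^p 𝓖 𝓒^s satisfying Conditions (I) and (II). Then there exists a constant C₂ > 0 such that e^{n h(𝓛)} ≤ #𝓛_n ≤ C₂ e^{n h(𝓛)} for every n ∈ ℕ. -/
import Mathlib


open MeasureTheory Filter Topology
open scoped ENNReal

/-- The full two-sided shift on `p` symbols. -/
abbrev FullShift (p : ℕ) : Type := ℤ → Fin p

/-- The left shift map. -/
def shiftMap {p : ℕ} : FullShift p → FullShift p := fun x n => x (n + 1)

/-- A (two-sided) shift space: a nonempty closed shift-invariant subset of the full shift. -/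
def IsShiftSpace {p : ℕ} (X : Set (FullShift p)) : Prop :=
  X.Nonempty ∧ IsClosed X ∧ shiftMap '' X = X

/-- `x` spells the word `w` starting at position `k`. -/
def spellsAt {p : ℕ} (x : FullShift p) (k : ℤ) (w : List (Fin p)) : Prop :=
  ∀ i : Fin w.length, x (k + (i : ℕ)) = w.get i

/-- The language of a shift space: all finite words occurring in its sequences. -/
def language {p : ℕ} (X : Set (FullShift p)) : Set (List (Fin p)) :=
  {w | ∃ x ∈ X, ∃ k : ℤ, spellsAt x k w}

/-- Words of length `n` in a collection `D`. -/
def wordsOfLen {p : ℕ} (D : Set (List (Fin p))) (n : ℕ) : Set (List (Fin p)) :=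
  {w ∈ D | w.length = n}

/-- Exponential growth rate `h(D) = limsup (1/n) log #D_n` of a collection of words. -/
noncomputable def growth {p : ℕ} (D : Set (List (Fin p))) : ℝ :=
  Filter.atTop.limsup fun n : ℕ => Real.log ((wordsOfLen D n).ncard) / n

/-- Topological entropy of a shift space (= the growth rate of its language). -/
noncomputable def htop {p : ℕ} (X : Set (FullShift p)) : ℝ := growth (language X)

/-- `glueWords m w v = w 0 ++ v 0 ++ w 1 ++ v 1 ++ ⋯ ++ v (m-1) ++ w m`. -/
def glueWords {p : ℕ} : ℕ → (ℕ → List (Fin p)) → (ℕ → List (Fin p)) → List (Fin p)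
  | 0, w, _ => w 0
  | (m + 1), w, v => glueWords m w v ++ v m ++ w (m + 1)

/-- (S)-specification on `G ⊆ L` with gap size `t`. -/
def HasSpecS {p : ℕ} (L G : Set (List (Fin p))) (t : ℕ) : Prop :=
  ∀ (m : ℕ) (w : ℕ → List (Fin p)), (∀ i ≤ m, w i ∈ G) →
    ∃ v : ℕ → List (Fin p), (∀ i < m, v i ∈ L ∧ (v i).length = t) ∧
      glueWords m w v ∈ L

/-- The central cylinder of a word `w`, starting at position `-⌊|w|/2⌋`. -/
def centralCylinder {p : ℕ} (w : List (Fin p)) : Set (FullShift p) :=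
  {x | spellsAt x (-((w.length / 2 : ℕ) : ℤ)) w}

/-- (Per)-specification on `G` with gap size `t`: the glued word can moreover be realized by
a periodic point of period exactly `|x| + t`. -/
def HasSpecPer {p : ℕ} (X : Set (FullShift p)) (G : Set (List (Fin p))) (t : ℕ) : Prop :=
  ∀ (m : ℕ) (w : ℕ → List (Fin p)), (∀ i ≤ m, w i ∈ G) →
    ∃ v : ℕ → List (Fin p), (∀ i < m, v i ∈ language X ∧ (v i).length = t) ∧
      glueWords m w v ∈ language X ∧
      ∃ z ∈ X, shiftMap^[(glueWords m w v).length + t] z = z ∧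
        z ∈ centralCylinder (glueWords m w v)

/-- A decomposition `L = 𝓒ᵖ 𝓖 𝓒ˢ` of a language. -/
def Decomp {p : ℕ} (L Cp G Cs : Set (List (Fin p))) : Prop :=
  Cp ⊆ L ∧ G ⊆ L ∧ Cs ⊆ L ∧
    ∀ w ∈ L, ∃ u v x, u ∈ Cp ∧ v ∈ G ∧ x ∈ Cs ∧ w = u ++ v ++ x

/-- `𝓖(M)`: words of `L` decomposable with prefix and suffix of length at most `M`. -/
def GM {p : ℕ} (L Cp G Cs : Set (List (Fin p))) (M : ℕ) : Set (List (Fin p)) :=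
  {w ∈ L | ∃ u v x, u ∈ Cp ∧ v ∈ G ∧ x ∈ Cs ∧ u.length ≤ M ∧ x.length ≤ M ∧ w = u ++ v ++ x}

/-- Condition (III): uniformly controlled extension of words of `𝓖(M)` to words of `𝓖`. -/
def CondIII {p : ℕ} (L Cp G Cs : Set (List (Fin p))) : Prop :=
  ∀ M : ℕ, ∃ τ : ℕ, ∀ v ∈ GM L Cp G Cs M,
    ∃ u w : List (Fin p), u.length ≤ τ ∧ w.length ≤ τ ∧ u ++ v ++ w ∈ G

/-- Shift invariance of a measure. -/
def ShiftInvariant {p : ℕ} (μ : Measure (FullShift p)) : Prop :=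
  Measure.map shiftMap μ = μ

/-- Measure-theoretic (Kolmogorov–Sinai) entropy of a shift-invariant measure, computed via
the generating partitions into cylinders of length `n`. -/
noncomputable def entropyOf {p : ℕ} (μ : Measure (FullShift p)) : ℝ :=
  Filter.atTop.liminf fun n : ℕ =>
    (∑ w : Fin n → Fin p,
      Real.negMulLog (μ {x : FullShift p | ∀ i : Fin n, x ((i : ℕ) : ℤ) = w i}).toReal) / n

/-- `μ` is a measure of maximal entropy for the shift space `X`. -/
def IsMME {p : ℕ} (X : Set (FullShift p)) (μ : Measure (FullShift p)) : Prop :=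
  IsProbabilityMeasure μ ∧ ShiftInvariant μ ∧ μ X = 1 ∧ entropyOf μ = htop X

/-- A shift space is intrinsically ergodic if it has exactly one measure of maximal entropy. -/
def IntrinsicallyErgodic {p : ℕ} (X : Set (FullShift p)) : Prop :=
  ∃! μ : Measure (FullShift p), IsMME X μ

/-- The set of points of `X` periodic of period at most `n`. -/
def PerN {p : ℕ} (X : Set (FullShift p)) (n : ℕ) : Set (FullShift p) :=
  {x ∈ X | ∃ k, 1 ≤ k ∧ k ≤ n ∧ shiftMap^[k] x = x}

/-- The measure evenly distributed on the periodic points of period at most `n`. -/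
noncomputable def perMeasure {p : ℕ} (X : Set (FullShift p)) (n : ℕ) :
    Measure (FullShift p) :=
  (((PerN X n).ncard : ℝ≥0∞))⁻¹ •
    Measure.sum (fun x : (PerN X n) => Measure.dirac (x : FullShift p))

/-- Weak* convergence of a sequence of measures. -/
def WeakStarLimit {p : ℕ} (μs : ℕ → Measure (FullShift p)) (μ : Measure (FullShift p)) : Prop :=
  ∀ f : C(FullShift p, ℝ),
    Tendsto (fun n => ∫ x, f x ∂(μs n)) atTop (𝓝 (∫ x, f x ∂μ))

/-- `Y` is a subshift factor of `X`. -/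
def IsSubshiftFactor {p q : ℕ} (X : Set (FullShift p)) (Y : Set (FullShift q)) : Prop :=
  IsShiftSpace Y ∧ ∃ π : FullShift p → FullShift q,
    Continuous π ∧ π '' X = Y ∧ ∀ x ∈ X, π (shiftMap x) = shiftMap (π x)

section Aux
variable {p : ℕ}

private lemma spellsAt_take {x : FullShift p} {k : ℤ} {w : List (Fin p)}
    (h : spellsAt x k w) (m : ℕ) : spellsAt x k (w.take m) := by
  intro i
  have hi : (i : ℕ) < w.length := by
    have := i.2; simp only [List.length_take] at this; omega
  simpa using h ⟨i, hi⟩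

private lemma spellsAt_drop {x : FullShift p} {k : ℤ} {w : List (Fin p)}
    (h : spellsAt x k w) (m : ℕ) : spellsAt x (k + m) (w.drop m) := by
  intro i
  have hi : m + (i : ℕ) < w.length := by
    have := i.2; simp only [List.length_drop] at this; omega
  have h1 := h ⟨m + i, hi⟩
  have h2 : (k : ℤ) + m + i = k + (m + (i:ℕ) : ℕ) := by push_cast; ring
  rw [h2]
  simpa using h1

private lemma take_mem_language {X : Set (FullShift p)} {w : List (Fin p)}
    (hw : w ∈ language X) (m : ℕ) : w.take m ∈ language X := by
  obtain ⟨x, hx, k, hs⟩ := hw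
  exact ⟨x, hx, k, spellsAt_take hs m⟩

private lemma drop_mem_language {X : Set (FullShift p)} {w : List (Fin p)}
    (hw : w ∈ language X) (m : ℕ) : w.drop m ∈ language X := by
  obtain ⟨x, hx, k, hs⟩ := hw
  exact ⟨x, hx, k + m, spellsAt_drop hs m⟩

private lemma wordsOfLen_subset_range (D : Set (List (Fin p))) (n : ℕ) :
    wordsOfLen D n ⊆ Set.range (List.ofFn : (Fin n → Fin p) → List (Fin p)) := by
  rintro w ⟨-, hw⟩
  refine ⟨fun i => w.get (Fin.cast hw.symm i), ?_⟩
  apply List.ext_get (by simp [hw])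
  intro i h1 h2
  simp [List.get_ofFn]

private lemma wordsOfLen_finite (D : Set (List (Fin p))) (n : ℕ) : (wordsOfLen D n).Finite :=
  (Set.finite_range _).subset (wordsOfLen_subset_range D n)

private lemma wordsOfLen_ncard_le (D : Set (List (Fin p))) (n : ℕ) :
    (wordsOfLen D n).ncard ≤ p ^ n := by
  refine le_trans (Set.ncard_le_ncard (wordsOfLen_subset_range D n) (Set.finite_range _)) ?_
  rw [← Set.image_univ]
  refine le_trans (Set.ncard_image_le Set.finite_univ) ?_
  simp [Set.ncard_univ, Nat.card_eq_fintype_card, Fintype.card_fun]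

private lemma wordsOfLen_language_nonempty {X : Set (FullShift p)} (hX : X.Nonempty) (n : ℕ) :
    (wordsOfLen (language X) n).Nonempty := by
  obtain ⟨x, hx⟩ := hX
  refine ⟨List.ofFn (fun i : Fin n => x i), ⟨x, hx, 0, ?_⟩, by simp⟩
  intro i
  simp [List.get_ofFn]

private lemma ncard_sprod {α β : Type*} (s : Set α) (t : Set β) (hs : s.Finite) (ht : t.Finite) :
    (s ×ˢ t).ncard = s.ncard * t.ncard := by
  rw [Set.ncard_eq_toFinset_card _ (hs.prod ht), Set.ncard_eq_toFinset_card _ hs,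
    Set.ncard_eq_toFinset_card _ ht, ← Finset.card_product]
  congr 1
  ext ⟨a, b⟩
  simp

private lemma ncard_wordsOfLen_add_le (X : Set (FullShift p)) (m n : ℕ) :
    (wordsOfLen (language X) (m + n)).ncard ≤
      (wordsOfLen (language X) m).ncard * (wordsOfLen (language X) n).ncard := by
  rw [← ncard_sprod _ _ (wordsOfLen_finite _ m) (wordsOfLen_finite _ n)]
  refine Set.ncard_le_ncard_of_injOn (fun w => (w.take m, w.drop m)) ?_ ?_
    ((wordsOfLen_finite _ m).prod (wordsOfLen_finite _ n))
  · rintro w ⟨hwL, hwn⟩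
    refine ⟨⟨take_mem_language hwL m, ?_⟩, ⟨drop_mem_language hwL m, ?_⟩⟩
    · rw [List.length_take, hwn]; omega
    · rw [List.length_drop, hwn]; omega
  · intro w1 _ w2 _ hw
    have h1 : w1.take m = w2.take m := congrArg Prod.fst hw
    have h2 : w1.drop m = w2.drop m := congrArg Prod.snd hw
    rw [← List.take_append_drop m w1, ← List.take_append_drop m w2, h1, h2]

private lemma glue_length {j t : ℕ} :
    ∀ (m : ℕ) (w v : ℕ → List (Fin p)), (∀ i ≤ m, (w i).length = j) →
    (∀ i < m, (v i).length = t) →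
    (glueWords m w v).length = (m + 1) * j + m * t := by
  intro m
  induction m with
  | zero => intro w v hw _; simpa [glueWords] using hw 0 le_rfl
  | succ m ih =>
    intro w v hw hv
    simp only [glueWords, List.length_append]
    rw [ih w v (fun i hi => hw i (hi.trans (Nat.le_succ m)))
      (fun i hi => hv i (hi.trans (Nat.lt_succ_self m))),
      hv m (Nat.lt_succ_self m), hw (m + 1) le_rfl]
    ring

private lemma glue_extract {j t : ℕ} :
    ∀ (m : ℕ) (w v : ℕ → List (Fin p)), (∀ i ≤ m, (w i).length = j) →
    (∀ i < m, (v i).length = t) →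
    ∀ i ≤ m, ((glueWords m w v).drop (i * (j + t))).take j = w i := by
  intro m
  induction m with
  | zero =>
    intro w v hw _ i hi
    interval_cases i
    simp only [glueWords, Nat.zero_mul, List.drop_zero]
    rw [← hw 0 le_rfl, List.take_length]
  | succ m ih =>
    intro w v hw hv i hi
    have hw' : ∀ i ≤ m, (w i).length = j := fun i hi => hw i (hi.trans (Nat.le_succ m))
    have hv' : ∀ i < m, (v i).length = t := fun i hi => hv i (hi.trans (Nat.lt_succ_self m))
    have hg : (glueWords m w v).length = (m + 1) * j + m * t := glue_length m w v hw' hv'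
    simp only [glueWords]
    rcases Nat.lt_succ_iff_lt_or_eq.mp (Nat.lt_succ_of_le hi) with him | him
    · have him' : i ≤ m := Nat.lt_succ_iff.mp him
      have hle : i * (j + t) + j ≤ (m + 1) * j + m * t := by
        have h1 : i * (j + t) + j ≤ m * (j + t) + j :=
          Nat.add_le_add_right (Nat.mul_le_mul_right _ him') j
        have h2 : m * (j + t) + j = (m + 1) * j + m * t := by ring
        exact h2 ▸ h1
      rw [List.append_assoc, List.drop_append_of_le_length (by omega),
        List.take_append_of_le_length (by rw [List.length_drop, hg]; omega)]
      exact ih w v hw' hv' i him'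
    · subst him
      have hlen : (glueWords m w v ++ v m).length = (m + 1) * (j + t) := by
        rw [List.length_append, hg, hv m (Nat.lt_succ_self m)]
        ring
      rw [List.drop_left' hlen, ← hw (m + 1) le_rfl, List.take_length]

end Aux
private lemma pow_le_card_glue {p : ℕ} {L G : Set (List (Fin p))} {t : ℕ}
    (hspec : HasSpecS L G t) (j m : ℕ) :
    (wordsOfLen G j).ncard ^ (m + 1) ≤ (wordsOfLen L ((m + 1) * j + m * t)).ncard := by
  classical
  rcases (wordsOfLen G j).eq_empty_or_nonempty with he | hne
  · simp [he]
  set A : Finset (List (Fin p)) := (wordsOfLen_finite G j).toFinset with hA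
  set N : ℕ := (m + 1) * j + m * t with hN
  set B : Finset (List (Fin p)) := (wordsOfLen_finite L N).toFinset with hB
  have key : ∀ f : Fin (m + 1) → A, ∃ g : List (Fin p),
      g ∈ wordsOfLen L N ∧
      ∀ i : Fin (m + 1), ((g.drop ((i : ℕ) * (j + t))).take j) = (f i : List (Fin p)) := by
    intro f
    set w : ℕ → List (Fin p) :=
      fun i => if h : i < m + 1 then (f ⟨i, h⟩ : List (Fin p)) else (f 0 : List (Fin p)) with hw
    have hmemA : ∀ i : Fin (m + 1), ((f i : List (Fin p)) ∈ wordsOfLen G j) := by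
      intro i
      exact (wordsOfLen_finite G j).mem_toFinset.mp (f i).2
    have hwG : ∀ i ≤ m, w i ∈ G := by
      intro i hi
      simp only [hw, dif_pos (Nat.lt_succ_of_le hi)]
      exact (hmemA _).1
    have hwlen : ∀ i ≤ m, (w i).length = j := by
      intro i hi
      simp only [hw, dif_pos (Nat.lt_succ_of_le hi)]
      exact (hmemA _).2
    obtain ⟨v, hv, hglue⟩ := hspec m w hwG
    have hvlen : ∀ i < m, (v i).length = t := fun i hi => (hv i hi).2
    refine ⟨glueWords m w v, ⟨hglue, glue_length m w v hwlen hvlen⟩, ?_⟩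
    intro i
    rw [glue_extract m w v hwlen hvlen i (Nat.lt_succ_iff.mp i.2)]
    simp only [hw, dif_pos i.2]
  choose Φ hΦmem hΦext using key
  have hinj : Function.Injective Φ := by
    intro f f' hff
    funext i
    have h1 := hΦext f i
    rw [hff, hΦext f' i] at h1
    exact Subtype.ext h1.symm
  have hcard : Fintype.card (Fin (m + 1) → A) ≤ Fintype.card B := by
    refine Fintype.card_le_of_injective
      (fun f => ⟨Φ f, by rw [hB, Set.Finite.mem_toFinset]; exact hΦmem f⟩) ?_
    intro f f' hff
    exact hinj (congrArg Subtype.val hff)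
  rw [Fintype.card_fun, Fintype.card_coe, Fintype.card_coe, Fintype.card_fin] at hcard
  rwa [Set.ncard_eq_toFinset_card _ (wordsOfLen_finite G j),
    Set.ncard_eq_toFinset_card _ (wordsOfLen_finite L N)]
/-- **Lemmas 5.1 and 5.3.** Under Conditions (I) and (II), there is `C₂ > 0` such that
`e^{n h(𝓛)} ≤ #𝓛_n ≤ C₂ e^{n h(𝓛)}` for every `n`. -/
theorem card_language_counting_bounds {p : ℕ} (X : Set (FullShift p))
    (hX : IsShiftSpace X) (Cp G Cs : Set (List (Fin p)))
    (hdec : Decomp (language X) Cp G Cs)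
    (hI : ∃ t : ℕ, HasSpecS (language X) G t)
    (hII : growth (Cp ∪ Cs) < htop X) :
    ∃ C₂ : ℝ, 0 < C₂ ∧ ∀ n : ℕ,
      Real.exp ((n : ℝ) * htop X) ≤ ((wordsOfLen (language X) n).ncard : ℝ) ∧
      ((wordsOfLen (language X) n).ncard : ℝ) ≤ C₂ * Real.exp ((n : ℝ) * htop X) := by
  classical
  obtain ⟨t, hspec⟩ := hI
  have hp : 0 < p := (hX.1.choose 0).pos
  have hp1 : (1 : ℝ) ≤ (p : ℝ) := by exact_mod_cast hp
  set Λ : ℕ → ℕ := fun n => (wordsOfLen (language X) n).ncard with hΛdef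
  have hΛ1 : ∀ n, 1 ≤ Λ n := fun n =>
    (Set.ncard_pos (wordsOfLen_finite _ n)).mpr (wordsOfLen_language_nonempty hX.1 n)
  have hΛpos : ∀ n, (0 : ℝ) < (Λ n : ℝ) := fun n => by exact_mod_cast hΛ1 n
  set u : ℕ → ℝ := fun n => Real.log (Λ n) with hudef
  have hu0 : ∀ n, 0 ≤ u n := fun n => Real.log_nonneg (by exact_mod_cast hΛ1 n)
  have hsub : Subadditive u := by
    intro m n
    have h1 : (Λ (m + n) : ℝ) ≤ (Λ m : ℝ) * (Λ n : ℝ) := by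
      exact_mod_cast ncard_wordsOfLen_add_le X m n
    calc u (m + n) ≤ Real.log ((Λ m : ℝ) * (Λ n : ℝ)) :=
          Real.log_le_log (hΛpos _) h1
      _ = u m + u n := Real.log_mul (hΛpos m).ne' (hΛpos n).ne'
  have hbdd : BddBelow (Set.range fun n : ℕ => u n / n) := by
    refine ⟨0, ?_⟩
    rintro x ⟨n, rfl⟩
    exact div_nonneg (hu0 n) (Nat.cast_nonneg n)
  have htend : Tendsto (fun n : ℕ => u n / n) atTop (𝓝 hsub.lim) := hsub.tendsto_lim hbdd
  set h : ℝ := hsub.lim with hhdef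
  have hheq : htop X = h := htend.limsup_eq
  have h0 : 0 ≤ h :=
    ge_of_tendsto' htend fun n => div_nonneg (hu0 n) (Nat.cast_nonneg n)
  -- lower bound
  have hlower : ∀ n : ℕ, Real.exp (n * h) ≤ (Λ n : ℝ) := by
    intro n
    rcases Nat.eq_zero_or_pos n with rfl | hn
    · simp only [Nat.cast_zero, zero_mul, Real.exp_zero]
      exact_mod_cast hΛ1 0
    · have h1 : h ≤ u n / n := hsub.lim_le_div hbdd hn.ne'
      have hnpos : (0 : ℝ) < n := by exact_mod_cast hn
      rw [le_div_iff₀ hnpos] at h1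
      calc Real.exp (n * h) ≤ Real.exp (u n) :=
            Real.exp_le_exp.mpr (by nlinarith)
        _ = Λ n := Real.exp_log (hΛpos n)
  -- upper bound on words of G
  have hγ : ∀ j : ℕ, ((wordsOfLen G j).ncard : ℝ) ≤ Real.exp (((j : ℝ) + t) * h) := by
    intro j
    set γ : ℕ := (wordsOfLen G j).ncard with hγdef
    rcases Nat.eq_zero_or_pos γ with hγ0 | hγpos
    · rw [hγ0]
      exact_mod_cast (Real.exp_pos _).le
    rcases Nat.eq_zero_or_pos (j + t) with hjt | hjt
    · have hj0 : j = 0 := by omega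
      have ht0 : t = 0 := by omega
      have h1 : γ ≤ Λ 0 := by
        rw [hγdef, hΛdef]
        subst hj0
        exact Set.ncard_le_ncard (fun w hw => ⟨hdec.2.1 hw.1, hw.2⟩)
          (wordsOfLen_finite _ 0)
      have h2 : Λ 0 ≤ 1 := by
        have : wordsOfLen (language X) 0 ⊆ {([] : List (Fin p))} := by
          intro w hw
          simpa [List.length_eq_zero_iff] using hw.2
        simpa using Set.ncard_le_ncard this (Set.finite_singleton _)
      have h3 : (γ : ℝ) ≤ 1 := by exact_mod_cast h1.trans h2
      calc (γ : ℝ) ≤ 1 := h3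
        _ ≤ Real.exp (((j : ℝ) + t) * h) := by
            rw [hj0, ht0]
            simp
    · -- j + t ≥ 1
      have hkey : ∀ m : ℕ, ((m : ℝ) + 1) * Real.log γ ≤ u ((m + 1) * j + m * t) := by
        intro m
        have hpow : (γ : ℝ) ^ (m + 1) ≤ (Λ ((m + 1) * j + m * t) : ℝ) := by
          exact_mod_cast pow_le_card_glue hspec j m
        have hlog := Real.log_le_log (by positivity) hpow
        rw [Real.log_pow] at hlog
        push_cast at hlog
        linarith
      have hNlb : ∀ m : ℕ, m ≤ (m + 1) * j + m * t := by
        intro m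
        have h1 : m ≤ m * (j + t) := Nat.le_mul_of_pos_right m hjt
        have h2 : m * (j + t) = m * j + m * t := Nat.mul_add m j t
        have h3 : m * j ≤ (m + 1) * j := Nat.mul_le_mul_right j (Nat.le_succ m)
        omega
      have hNtop : Tendsto (fun m : ℕ => (m + 1) * j + m * t) atTop atTop :=
        tendsto_atTop_mono hNlb tendsto_id
      have ht1 : Tendsto (fun m : ℕ => u ((m + 1) * j + m * t) / (((m + 1) * j + m * t : ℕ) : ℝ))
          atTop (𝓝 h) := htend.comp hNtop
      have hb : Tendsto (fun m : ℕ => (t : ℝ) / ((m : ℝ) + 1)) atTop (𝓝 0) :=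
        Tendsto.div_atTop tendsto_const_nhds
          (tendsto_atTop_add_const_right atTop 1 tendsto_natCast_atTop_atTop)
      have hfrac : Tendsto (fun m : ℕ => (((m + 1) * j + m * t : ℕ) : ℝ) / ((m : ℝ) + 1)) atTop
          (𝓝 ((j : ℝ) + t)) := by
        have hmain : Tendsto (fun m : ℕ => (j : ℝ) + t - (t : ℝ) / ((m : ℝ) + 1)) atTop
            (𝓝 ((j : ℝ) + t - 0)) := tendsto_const_nhds.sub hb
        rw [sub_zero] at hmain
        refine hmain.congr fun m => ?_
        have hm1 : ((m : ℝ) + 1) ≠ 0 := by positivity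
        push_cast
        field_simp
        ring
      have ht3 : Tendsto (fun m : ℕ => u ((m + 1) * j + m * t) / ((m : ℝ) + 1)) atTop
          (𝓝 (h * ((j : ℝ) + t))) := by
        refine (ht1.mul hfrac).congr' ?_
        filter_upwards [eventually_ge_atTop 1] with m hm
        have hNpos : (0 : ℝ) < (((m + 1) * j + m * t : ℕ) : ℝ) := by
          have h1 : 1 ≤ (m + 1) * j + m * t := le_trans hm (hNlb m)
          exact_mod_cast h1
        show u ((m + 1) * j + m * t) / _ * _ = _
        rw [div_mul_div_comm, mul_comm (u ((m + 1) * j + m * t)),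
          mul_div_mul_left _ _ hNpos.ne']
      have hloggam : Real.log γ ≤ h * ((j : ℝ) + t) := by
        refine ge_of_tendsto ht3 (Filter.Eventually.of_forall fun m => ?_)
        have hk := hkey m
        rw [le_div_iff₀ (by positivity : (0 : ℝ) < (m : ℝ) + 1)]
        linarith
      calc (γ : ℝ) = Real.exp (Real.log γ) := (Real.exp_log (by exact_mod_cast hγpos)).symm
        _ ≤ Real.exp (((j : ℝ) + t) * h) :=
            Real.exp_le_exp.mpr (by rw [mul_comm] at hloggam; exact hloggam)
  -- bound on prefix/suffix words
  set D : Set (List (Fin p)) := Cp ∪ Cs with hDdef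
  have hgD : growth D < h := hheq ▸ hII
  set h' : ℝ := (growth D + h) / 2 with h'def
  have hh'1 : growth D < h' := by rw [h'def]; linarith
  have hh'2 : h' < h := by rw [h'def]; linarith
  have hboundD : Filter.IsBoundedUnder (· ≤ ·) atTop
      (fun n : ℕ => Real.log ((wordsOfLen D n).ncard) / n) := by
    apply Filter.isBoundedUnder_of
    refine ⟨Real.log p, fun n => ?_⟩
    rcases Nat.eq_zero_or_pos n with rfl | hn
    · simp [Real.log_nonneg hp1]
    · have hnpos : (0 : ℝ) < n := by exact_mod_cast hn
      rw [div_le_iff₀ hnpos]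
      rcases Nat.eq_zero_or_pos (wordsOfLen D n).ncard with h0' | hpos'
      · rw [h0']
        push_cast
        rw [Real.log_zero]
        positivity
      · have hdn : ((wordsOfLen D n).ncard : ℝ) ≤ (p : ℝ) ^ n := by
          exact_mod_cast wordsOfLen_ncard_le D n
        calc Real.log ((wordsOfLen D n).ncard) ≤ Real.log ((p : ℝ) ^ n) :=
              Real.log_le_log (by exact_mod_cast hpos') hdn
          _ = n * Real.log p := by
              rw [Real.log_pow]
          _ = Real.log p * n := mul_comm _ _
  have hev : ∀ᶠ n in atTop, Real.log ((wordsOfLen D n).ncard) / n < h' :=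
    Filter.eventually_lt_of_limsup_lt hh'1 hboundD
  obtain ⟨N₀, hN₀⟩ := Filter.eventually_atTop.mp hev
  set N₁ : ℕ := max N₀ 1 with hN₁def
  set C' : ℝ := (p : ℝ) ^ N₁ * Real.exp (N₁ * |h'|) + 1 with hC'def
  have hC'1 : 1 ≤ C' := le_add_of_nonneg_left (by positivity)
  have hC'0 : 0 < C' := lt_of_lt_of_le one_pos hC'1
  have hdbound : ∀ i : ℕ, ((wordsOfLen D i).ncard : ℝ) ≤ C' * Real.exp (i * h') := by
    intro i
    rcases le_or_gt N₁ i with hi | hi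
    · have h1 := hN₀ i (le_trans (le_max_left _ _) hi)
      rcases Nat.eq_zero_or_pos (wordsOfLen D i).ncard with h0' | hpos'
      · rw [h0']; push_cast; positivity
      · have hipos : (0 : ℝ) < i := by
          have h2 : 1 ≤ i := le_trans (le_max_right _ _) hi
          exact_mod_cast h2
        rw [div_lt_iff₀ hipos] at h1
        have hcardle : ((wordsOfLen D i).ncard : ℝ) ≤ Real.exp (i * h') := by
          calc ((wordsOfLen D i).ncard : ℝ)
              = Real.exp (Real.log ((wordsOfLen D i).ncard)) :=
                (Real.exp_log (by exact_mod_cast hpos')).symm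
            _ ≤ Real.exp (i * h') := Real.exp_le_exp.mpr (by linarith)
        exact hcardle.trans (le_mul_of_one_le_left (Real.exp_pos _).le hC'1)
    · have h1 : ((wordsOfLen D i).ncard : ℝ) ≤ (p : ℝ) ^ i := by
        exact_mod_cast wordsOfLen_ncard_le D i
      have h2 : (p : ℝ) ^ i ≤ (p : ℝ) ^ N₁ := pow_le_pow_right₀ hp1 hi.le
      have hIle : (i : ℝ) ≤ N₁ := by exact_mod_cast hi.le
      have h3 : (0 : ℝ) ≤ N₁ * |h'| + i * h' := by
        have e1 := mul_le_mul_of_nonneg_left (neg_abs_le h')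
          (by positivity : (0 : ℝ) ≤ (i : ℝ))
        rw [mul_neg] at e1
        have e2 : (i : ℝ) * |h'| ≤ (N₁ : ℝ) * |h'| :=
          mul_le_mul_of_nonneg_right hIle (abs_nonneg _)
        linarith
      have h4 : (1 : ℝ) ≤ Real.exp (N₁ * |h'|) * Real.exp (i * h') := by
        rw [← Real.exp_add]
        exact Real.one_le_exp h3
      calc ((wordsOfLen D i).ncard : ℝ) ≤ (p : ℝ) ^ N₁ := h1.trans h2
        _ = (p : ℝ) ^ N₁ * 1 := (mul_one _).symm
        _ ≤ (p : ℝ) ^ N₁ * (Real.exp (N₁ * |h'|) * Real.exp (i * h')) :=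
            mul_le_mul_of_nonneg_left h4 (by positivity)
        _ = ((p : ℝ) ^ N₁ * Real.exp (N₁ * |h'|)) * Real.exp (i * h') := by ring
        _ ≤ C' * Real.exp (i * h') := by
            have h5 : (p : ℝ) ^ N₁ * Real.exp (N₁ * |h'|) ≤ C' := by rw [hC'def]; linarith
            exact mul_le_mul_of_nonneg_right h5 (Real.exp_pos _).le
  -- geometric sum
  set r : ℝ := Real.exp (h' - h) with hrdef
  have hr0 : (0 : ℝ) < r := Real.exp_pos _
  have hr1 : r < 1 := by
    rw [hrdef]
    calc Real.exp (h' - h) < Real.exp 0 := Real.exp_lt_exp.mpr (by linarith)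
      _ = 1 := Real.exp_zero
  have h1r : (0 : ℝ) < (1 - r)⁻¹ := inv_pos.mpr (by linarith)
  have hsum : ∀ n : ℕ, (∑ i ∈ Finset.range (n + 1), r ^ i) ≤ (1 - r)⁻¹ := by
    intro n
    refine le_trans (Summable.sum_le_tsum (Finset.range (n + 1)) (fun i _ => by positivity)
      (summable_geometric_of_lt_one hr0.le hr1)) ?_
    rw [tsum_geometric_of_lt_one hr0.le hr1]
  -- main upper bound
  have hupper : ∀ n : ℕ,
      (Λ n : ℝ) ≤ (C' ^ 2 * Real.exp (t * h) * ((1 - r)⁻¹) ^ 2) * Real.exp (n * h) := by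
    intro n
    obtain ⟨U, V, W, hUVW⟩ : ∃ U V W : List (Fin p) → List (Fin p),
        ∀ w ∈ language X, U w ∈ Cp ∧ V w ∈ G ∧ W w ∈ Cs ∧ w = U w ++ V w ++ W w := by
      choose! U V W h1 h2 h3 h4 using hdec.2.2.2
      exact ⟨U, V, W, fun w hw => ⟨h1 w hw, h2 w hw, h3 w hw, h4 w hw⟩⟩
    set S : Finset (ℕ × ℕ) := Finset.range (n + 1) ×ˢ Finset.range (n + 1) with hSdef
    set A : ℕ × ℕ → Set (List (Fin p)) := fun ik =>
      {w ∈ wordsOfLen (language X) n | (U w).length = ik.1 ∧ (W w).length = ik.2} with hAdef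
    have hAfin : ∀ ik, (A ik).Finite := fun ik =>
      (wordsOfLen_finite (language X) n).subset fun w hw => hw.1
    have hlen : ∀ w ∈ wordsOfLen (language X) n,
        (U w).length + (V w).length + (W w).length = n := by
      intro w hw
      have h1 := congrArg List.length (hUVW w hw.1).2.2.2
      simp only [List.length_append] at h1
      have h2 := hw.2
      omega
    have hcover : (wordsOfLen_finite (language X) n).toFinset ⊆
        S.biUnion fun ik => (hAfin ik).toFinset := by
      intro w hw
      rw [Set.Finite.mem_toFinset] at hw
      refine Finset.mem_biUnion.mpr ⟨((U w).length, (W w).length), ?_, ?_⟩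
      · have := hlen w hw
        simp only [hSdef, Finset.mem_product, Finset.mem_range]
        omega
      · rw [Set.Finite.mem_toFinset]
        exact ⟨hw, rfl, rfl⟩
    have hΛsum : Λ n ≤ ∑ ik ∈ S, (A ik).ncard := by
      calc Λ n = (wordsOfLen_finite (language X) n).toFinset.card :=
            Set.ncard_eq_toFinset_card _ _
        _ ≤ (S.biUnion fun ik => (hAfin ik).toFinset).card := Finset.card_le_card hcover
        _ ≤ ∑ ik ∈ S, (hAfin ik).toFinset.card := Finset.card_biUnion_le
        _ = ∑ ik ∈ S, (A ik).ncard := by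
            refine Finset.sum_congr rfl fun ik _ => ?_
            rw [Set.ncard_eq_toFinset_card _ (hAfin ik)]
    have hcount : ∀ i k : ℕ, (A (i, k)).ncard ≤
        (wordsOfLen Cp i).ncard *
          ((wordsOfLen G (n - i - k)).ncard * (wordsOfLen Cs k).ncard) := by
      intro i k
      rw [← ncard_sprod _ _ (wordsOfLen_finite G _) (wordsOfLen_finite Cs _),
        ← ncard_sprod _ _ (wordsOfLen_finite Cp _)
          ((wordsOfLen_finite G _).prod (wordsOfLen_finite Cs _))]
      refine Set.ncard_le_ncard_of_injOn (fun w => (U w, V w, W w)) ?_ ?_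
        ((wordsOfLen_finite Cp _).prod
          ((wordsOfLen_finite G _).prod (wordsOfLen_finite Cs _)))
      · rintro w ⟨hw, hUi, hWk⟩
        obtain ⟨m1, m2, m3, -⟩ := hUVW w hw.1
        have hl := hlen w hw
        show (U w, V w, W w) ∈
          wordsOfLen Cp i ×ˢ (wordsOfLen G (n - i - k) ×ˢ wordsOfLen Cs k)
        refine ⟨⟨m1, hUi⟩, ⟨m2, ?_⟩, ⟨m3, hWk⟩⟩
        show (V w).length = n - i - k
        omega
      · intro w1 hw1 w2 hw2 heq
        simp only [Prod.mk.injEq] at heq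
        have e1 := (hUVW w1 hw1.1.1).2.2.2
        have e2 := (hUVW w2 hw2.1.1).2.2.2
        rw [e1, e2, heq.1, heq.2.1, heq.2.2]
    have hterm : ∀ ik ∈ S, ((A ik).ncard : ℝ) ≤
        (C' ^ 2 * Real.exp (t * h) * Real.exp (n * h)) * (r ^ ik.1 * r ^ ik.2) := by
      rintro ⟨i, k⟩ -
      rcases le_or_gt (i + k) n with hik | hik
      · have hA := hcount i k
        have hc1 : ((wordsOfLen Cp i).ncard : ℝ) ≤ C' * Real.exp (i * h') := by
          refine le_trans ?_ (hdbound i)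
          have hsubset : wordsOfLen Cp i ⊆ wordsOfLen D i := fun w hw => ⟨Or.inl hw.1, hw.2⟩
          exact_mod_cast Set.ncard_le_ncard hsubset (wordsOfLen_finite D i)
        have hc3 : ((wordsOfLen Cs k).ncard : ℝ) ≤ C' * Real.exp (k * h') := by
          refine le_trans ?_ (hdbound k)
          have hsubset : wordsOfLen Cs k ⊆ wordsOfLen D k := fun w hw => ⟨Or.inr hw.1, hw.2⟩
          exact_mod_cast Set.ncard_le_ncard hsubset (wordsOfLen_finite D k)
        have hc2 : ((wordsOfLen G (n - i - k)).ncard : ℝ) ≤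
            Real.exp ((((n - i - k : ℕ) : ℝ) + t) * h) := hγ (n - i - k)
        have hcast : ((n - i - k : ℕ) : ℝ) = (n : ℝ) - i - k := by
          have h1 : ((n - i - k) + (i + k)) = n := by omega
          have h2 := congrArg (fun x : ℕ => (x : ℝ)) h1
          push_cast at h2
          linarith
        calc ((A (i, k)).ncard : ℝ)
            ≤ ((wordsOfLen Cp i).ncard : ℝ) * (((wordsOfLen G (n - i - k)).ncard : ℝ) *
              ((wordsOfLen Cs k).ncard : ℝ)) := by exact_mod_cast hA
          _ ≤ (C' * Real.exp (i * h')) * (Real.exp ((((n - i - k : ℕ) : ℝ) + t) * h) *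
              (C' * Real.exp (k * h'))) := by
              apply mul_le_mul hc1 ?_ (by positivity) (by positivity)
              exact mul_le_mul hc2 hc3 (Nat.cast_nonneg _) (Real.exp_pos _).le
          _ = (C' ^ 2 * Real.exp (t * h) * Real.exp (n * h)) * (r ^ i * r ^ k) := by
              rw [hrdef, ← Real.exp_nat_mul, ← Real.exp_nat_mul, hcast]
              rw [show C' * Real.exp (↑i * h') * (Real.exp (((n : ℝ) - ↑i - ↑k + ↑t) * h) *
                  (C' * Real.exp (↑k * h'))) =
                  C' ^ 2 * Real.exp (↑i * h' + (((n : ℝ) - ↑i - ↑k + ↑t) * h + ↑k * h')) from by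
                rw [Real.exp_add, Real.exp_add]; ring]
              rw [show C' ^ 2 * Real.exp (↑t * h) * Real.exp (↑n * h) *
                  (Real.exp (↑i * (h' - h)) * Real.exp (↑k * (h' - h))) =
                  C' ^ 2 * Real.exp (↑t * h + (↑n * h + (↑i * (h' - h) + ↑k * (h' - h)))) from by
                rw [Real.exp_add, Real.exp_add, Real.exp_add]; ring]
              congr 1
              ring
      · have hempty : A (i, k) = ∅ := by
          rw [Set.eq_empty_iff_forall_notMem]
          rintro w ⟨hw, hUi, hWk⟩
          have := hlen w hw
          omega
        rw [hempty]
        simp only [Set.ncard_empty, Nat.cast_zero]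
        positivity
    calc (Λ n : ℝ) ≤ ∑ ik ∈ S, ((A ik).ncard : ℝ) := by exact_mod_cast hΛsum
      _ ≤ ∑ ik ∈ S, (C' ^ 2 * Real.exp (t * h) * Real.exp (n * h)) * (r ^ ik.1 * r ^ ik.2) :=
          Finset.sum_le_sum hterm
      _ = ∑ i ∈ Finset.range (n + 1), ∑ k ∈ Finset.range (n + 1),
            (C' ^ 2 * Real.exp (t * h) * Real.exp (n * h)) * (r ^ i * r ^ k) := by
          rw [hSdef, Finset.sum_product]
      _ = (C' ^ 2 * Real.exp (t * h) * Real.exp (n * h)) *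
            ((∑ i ∈ Finset.range (n + 1), r ^ i) * (∑ k ∈ Finset.range (n + 1), r ^ k)) := by
          rw [Finset.sum_mul_sum, Finset.mul_sum]
          refine Finset.sum_congr rfl fun i _ => ?_
          rw [Finset.mul_sum]
      _ ≤ (C' ^ 2 * Real.exp (t * h) * Real.exp (n * h)) * ((1 - r)⁻¹ * (1 - r)⁻¹) := by
          have hge : (0 : ℝ) ≤ ∑ i ∈ Finset.range (n + 1), r ^ i :=
            Finset.sum_nonneg fun i _ => by positivity
          refine mul_le_mul_of_nonneg_left ?_ (by positivity)
          exact mul_le_mul (hsum n) (hsum n) hge h1r.le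
      _ = (C' ^ 2 * Real.exp (t * h) * ((1 - r)⁻¹) ^ 2) * Real.exp (n * h) := by ring
  refine ⟨C' ^ 2 * Real.exp (t * h) * ((1 - r)⁻¹) ^ 2, ?_, fun n => ⟨?_, ?_⟩⟩
  · exact mul_pos (mul_pos (pow_pos hC'0 2) (Real.exp_pos _)) (pow_pos h1r 2)
  · rw [hheq]
    exact hlower n
  · rw [hheq]
    exact hupper n
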